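/- arXiv:2208.11073 — 4 statements merged into one kernel-verified Lean document; each statement's English description precedes it below -/
import Mathlib

section
/- A matrix A in SL(2,ℝ) belongs to a one-parameter subgroup of SL(2,ℝ) (i.e., A = exp(X) for some X in sl(2,ℝ)) if and only if either tr A > -2 or A = -I. -/
/-!
A traceless 2×2 matrix satisfies `X ^ 2 = -det X • 1` (Cayley–Hamilton), so the exponential
series collapses to `exp X = cos θ • 1 + sinc θ • X` when `det X = θ ^ 2 ≥ 0` and to
`exp X = cosh μ • 1 + (sinh μ / μ) • X` when `det X = -μ ^ 2 < 0`. Its trace is `2 cos θ` or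
`2 cosh μ`, hence `≥ -2`, with equality only when `sin θ = 0`, and then `exp X = -1`.
Conversely, write `A = (t / 2) • 1 + B` with `t = tr A` and `B` traceless, so that
`B ^ 2 = (t ^ 2 / 4 - 1) • 1`; choosing `cos θ = t / 2` (for `-2 < t ≤ 2`) or `cosh μ = t / 2`
(for `t > 2`), a suitable rescaling of `B` exponentiates to `A`. Finally `-1 = exp (π J)` for the
rotation generator `J`.
-/

open NormedSpace Real
open scoped Nat

namespace Real

lemma mul_sinc (x : ℝ) : x * sinc x = sin x := by
  rcases eq_or_ne x 0 with rfl | hx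
  · simp
  · rw [sinc_of_ne_zero hx, mul_div_cancel₀ _ hx]

lemma sinc_pos_of_abs_lt_pi {x : ℝ} (hx : |x| < π) : 0 < sinc x := by
  wlog h0 : 0 ≤ x generalizing x
  · simpa using this (x := -x) (by rwa [abs_neg]) (by linarith)
  rcases h0.eq_or_lt with rfl | hpos
  · simp
  · rw [sinc_of_ne_zero hpos.ne']
    exact div_pos (sin_pos_of_pos_of_lt_pi hpos (abs_lt.1 hx).2) hpos

lemma sinc_eq_zero_of_cos_eq_neg_one {x : ℝ} (hx : cos x = -1) : sinc x = 0 := by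
  have hx0 : x ≠ 0 := by rintro rfl; norm_num at hx
  have hsin : sin x = 0 := by nlinarith [sin_sq_add_cos_sq x]
  rw [sinc_of_ne_zero hx0, hsin, zero_div]

lemma hasSum_cos_neg_sq_pow (x : ℝ) :
    HasSum (fun k : ℕ => (-x ^ 2) ^ k / (2 * k)!) (cos x) := by
  convert hasSum_cos x using 2 with k
  rw [neg_pow, ← pow_mul]

lemma hasSum_sinc_neg_sq_pow (x : ℝ) :
    HasSum (fun k : ℕ => (-x ^ 2) ^ k / (2 * k + 1)!) (sinc x) := by
  rcases eq_or_ne x 0 with rfl | hx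
  · convert hasSum_ite_eq 0 (1 : ℝ) using 1
    · ext k
      rcases eq_or_ne k 0 with rfl | hk <;> simp [*]
    · exact sinc_zero
  · rw [sinc_of_ne_zero hx]
    have hterm (k : ℕ) : (-x ^ 2) ^ k / (2 * k + 1)! =
        (-1) ^ k * x ^ (2 * k + 1) / (2 * k + 1)! / x := by
      rw [neg_pow, ← pow_mul, pow_succ]
      field_simp
    simpa only [hterm] using (hasSum_sin x).div_const x

lemma hasSum_cosh_sq_pow (x : ℝ) :
    HasSum (fun k : ℕ => (x ^ 2) ^ k / (2 * k)!) (cosh x) := by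
  convert hasSum_cosh x using 2 with k
  rw [← pow_mul]

lemma hasSum_sinh_div_sq_pow {x : ℝ} (hx : x ≠ 0) :
    HasSum (fun k : ℕ => (x ^ 2) ^ k / (2 * k + 1)!) (sinh x / x) := by
  have hterm (k : ℕ) : (x ^ 2) ^ k / (2 * k + 1)! = x ^ (2 * k + 1) / (2 * k + 1)! / x := by
    rw [← pow_mul, pow_succ]
    field_simp
  simpa only [hterm] using (hasSum_sinh x).div_const x

end Real

section SqEqSmulOne

variable {𝔸 : Type*} [Ring 𝔸] [Algebra ℝ 𝔸] [TopologicalSpace 𝔸] [IsTopologicalRing 𝔸]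
  [T2Space 𝔸] [ContinuousSMul ℝ 𝔸]

theorem exp_eq_of_sq_eq_smul_one {X : 𝔸} {c f g : ℝ} (hX : X ^ 2 = c • 1)
    (hf : HasSum (fun k : ℕ => c ^ k / (2 * k)!) f)
    (hg : HasSum (fun k : ℕ => c ^ k / (2 * k + 1)!) g) :
    exp X = f • 1 + g • X := by
  rw [exp_eq_tsum ℝ]
  have heven (k : ℕ) : ((2 * k)! : ℝ)⁻¹ • X ^ (2 * k) = (c ^ k / (2 * k)!) • (1 : 𝔸) := by
    rw [pow_mul, hX, smul_pow, one_pow, smul_smul, inv_mul_eq_div]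
  have hodd (k : ℕ) : ((2 * k + 1)! : ℝ)⁻¹ • X ^ (2 * k + 1) = (c ^ k / (2 * k + 1)!) • X := by
    rw [pow_succ, pow_mul, hX, smul_pow, one_pow, smul_mul_assoc, one_mul, smul_smul,
      inv_mul_eq_div]
  refine (HasSum.even_add_odd ?_ ?_).tsum_eq
  · simpa only [heven] using hf.smul_const (1 : 𝔸)
  · simpa only [hodd] using hg.smul_const X

theorem exp_eq_cos_smul_one_add_sinc_smul {X : 𝔸} {θ : ℝ} (hX : X ^ 2 = (-θ ^ 2) • 1) :
    exp X = cos θ • 1 + sinc θ • X :=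
  exp_eq_of_sq_eq_smul_one hX (hasSum_cos_neg_sq_pow θ) (hasSum_sinc_neg_sq_pow θ)

theorem exp_eq_cosh_smul_one_add_smul {X : 𝔸} {μ : ℝ} (hμ : μ ≠ 0) (hX : X ^ 2 = (μ ^ 2) • 1) :
    exp X = cosh μ • 1 + (sinh μ / μ) • X :=
  exp_eq_of_sq_eq_smul_one hX (hasSum_cosh_sq_pow μ) (hasSum_sinh_div_sq_pow hμ)

theorem exp_inv_sinc_smul {Y : 𝔸} {θ : ℝ} (hθ : sinc θ ≠ 0) (hY : Y ^ 2 = (-sin θ ^ 2) • 1) :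
    exp ((sinc θ)⁻¹ • Y) = cos θ • 1 + Y := by
  rw [exp_eq_cos_smul_one_add_sinc_smul, smul_inv_smul₀ hθ]
  rw [smul_pow, hY, smul_smul, ← mul_sinc]
  congr 1
  field_simp

theorem exp_div_sinh_smul {Y : 𝔸} {μ : ℝ} (hμ : μ ≠ 0) (hY : Y ^ 2 = (sinh μ ^ 2) • 1) :
    exp ((μ / sinh μ) • Y) = cosh μ • 1 + Y := by
  have hsinh : sinh μ ≠ 0 := sinh_ne_zero.2 hμ
  rw [exp_eq_cosh_smul_one_add_smul hμ, smul_smul, div_mul_div_cancel₀ hμ, div_self hsinh, one_smul]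
  rw [smul_pow, hY, smul_smul]
  congr 1
  field_simp

end SqEqSmulOne

namespace Matrix

theorem sq_eq_trace_smul_sub_det_smul_one {R : Type*} [CommRing R] (A : Matrix (Fin 2) (Fin 2) R) :
    A ^ 2 = A.trace • A - A.det • 1 := by
  ext i j
  fin_cases i <;> fin_cases j <;>
    simp [sq, mul_apply, Fin.sum_univ_succ, det_fin_two, trace_fin_two] <;> ring

theorem trace_smul_one_add_smul {R : Type*} [CommRing R] {X : Matrix (Fin 2) (Fin 2) R}
    (hX : X.trace = 0) (a b : R) : (a • 1 + b • X).trace = 2 * a := by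
  simp [trace_add, trace_smul, hX, mul_comm]

variable {K : Type*} [Field K] [NeZero (2 : K)]

theorem trace_sub_half_trace_smul_one (A : Matrix (Fin 2) (Fin 2) K) :
    (A - (A.trace / 2) • 1).trace = 0 := by
  rw [trace_sub, trace_smul, trace_one, Fintype.card_fin, smul_eq_mul]
  field_simp
  ring

theorem sub_half_trace_smul_one_sq (A : Matrix (Fin 2) (Fin 2) K) :
    (A - (A.trace / 2) • 1) ^ 2 = ((A.trace / 2) ^ 2 - A.det) • 1 := by
  ext i j
  fin_cases i <;> fin_cases j <;>
    simp [sq, mul_apply, Fin.sum_univ_succ, det_fin_two, trace_fin_two, one_apply] <;>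
    field_simp <;> ring

end Matrix

open Matrix

theorem neg_two_lt_trace_exp_or_exp_eq_neg_one {X : Matrix (Fin 2) (Fin 2) ℝ}
    (hX : X.trace = 0) : -2 < (exp X).trace ∨ exp X = -1 := by
  have hsq : X ^ 2 = (-X.det) • 1 := by
    rw [sq_eq_trace_smul_sub_det_smul_one, hX, zero_smul, zero_sub, neg_smul]
  rcases le_or_gt 0 X.det with hdet | hdet
  · have hθ : X ^ 2 = (-√X.det ^ 2) • 1 := by rwa [sq_sqrt hdet]
    rw [exp_eq_cos_smul_one_add_sinc_smul hθ]
    rcases (neg_one_le_cos √X.det).eq_or_lt with hcos | hcos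
    · right
      rw [← hcos, sinc_eq_zero_of_cos_eq_neg_one hcos.symm, zero_smul, add_zero, neg_one_smul]
    · left
      rw [trace_smul_one_add_smul hX]
      linarith
  · have hμ : X ^ 2 = (√(-X.det) ^ 2) • 1 := by rwa [sq_sqrt (by linarith)]
    left
    rw [exp_eq_cosh_smul_one_add_smul (sqrt_pos.2 (neg_pos.2 hdet)).ne' hμ,
      trace_smul_one_add_smul hX]
    linarith [one_le_cosh √(-X.det)]

theorem exists_exp_eq_of_trace_mem_Ioc {A : Matrix (Fin 2) (Fin 2) ℝ} (hA : A.det = 1)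
    (ht : A.trace ∈ Set.Ioc (-2) 2) : ∃ X : Matrix (Fin 2) (Fin 2) ℝ, X.trace = 0 ∧ exp X = A := by
  set θ := arccos (A.trace / 2)
  have hcos : cos θ = A.trace / 2 := cos_arccos (by linarith [ht.1]) (by linarith [ht.2])
  have hθ : |θ| < π := by
    rw [abs_of_nonneg (arccos_nonneg _)]
    exact arccos_lt_pi.2 (by linarith [ht.1])
  have hsinc : sinc θ ≠ 0 := (sinc_pos_of_abs_lt_pi hθ).ne'
  refine ⟨(sinc θ)⁻¹ • (A - (A.trace / 2) • 1), ?_, ?_⟩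
  · rw [trace_smul, trace_sub_half_trace_smul_one, smul_zero]
  · rw [exp_inv_sinc_smul hsinc, hcos, add_sub_cancel]
    rw [sub_half_trace_smul_one_sq, hA, ← hcos, ← sin_sq_add_cos_sq θ]
    congr 1
    ring

theorem exists_exp_eq_of_two_lt_trace {A : Matrix (Fin 2) (Fin 2) ℝ} (hA : A.det = 1)
    (ht : 2 < A.trace) : ∃ X : Matrix (Fin 2) (Fin 2) ℝ, X.trace = 0 ∧ exp X = A := by
  set μ := arcosh (A.trace / 2)
  have hcosh : cosh μ = A.trace / 2 := cosh_arcosh (by linarith)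
  refine ⟨(μ / sinh μ) • (A - (A.trace / 2) • 1), ?_, ?_⟩
  · rw [trace_smul, trace_sub_half_trace_smul_one, smul_zero]
  · rw [exp_div_sinh_smul (arcosh_pos (by linarith)).ne', hcosh, add_sub_cancel]
    rw [sub_half_trace_smul_one_sq, hA, sinh_sq, hcosh]

theorem exp_pi_smul_rotation : exp (π • !![0, -1; 1, 0] : Matrix (Fin 2) (Fin 2) ℝ) = -1 := by
  have hJ : (!![0, -1; 1, 0] : Matrix (Fin 2) (Fin 2) ℝ) ^ 2 = -1 := by
    ext i j
    fin_cases i <;> fin_cases j <;> simp [sq]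
  rw [exp_eq_cos_smul_one_add_sinc_smul (θ := π), cos_pi, sinc_eq_zero_of_cos_eq_neg_one cos_pi,
    zero_smul, add_zero, neg_one_smul]
  rw [smul_pow, hJ, smul_neg, neg_smul]

/-- A matrix `A ∈ SL(2,ℝ)` lies on a one-parameter subgroup of `SL(2,ℝ)`, i.e.
`A = exp X` for some traceless `X`, iff `tr A > -2` or `A = -1`. -/
theorem sl2_exp_mem_iff (A : Matrix (Fin 2) (Fin 2) ℝ) (hA : A.det = 1) :
    (∃ X : Matrix (Fin 2) (Fin 2) ℝ, X.trace = 0 ∧ NormedSpace.exp X = A) ↔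
      (-2 < A.trace ∨ A = -1) := by
  constructor
  · rintro ⟨X, hX, rfl⟩
    exact neg_two_lt_trace_exp_or_exp_eq_neg_one hX
  · rintro (ht | rfl)
    · rcases le_or_gt A.trace 2 with h2 | h2
      · exact exists_exp_eq_of_trace_mem_Ioc hA ⟨ht, h2⟩
      · exact exists_exp_eq_of_two_lt_trace hA h2
    · exact ⟨π • !![0, -1; 1, 0], by simp [trace_fin_two], exp_pi_smul_rotation⟩
end

section
/- In the six-dimensional Lie algebra g^ess with basis P^t, D, K, G^x, P^x, I and brackets [D,P^t]=-2P^t, [D,K]=2K, [P^t,K]=D, [P^t,G^x]=P^x, [D,G^x]=G^x, [D,P^x]=-P^x, [K,P^x]=-G^x, [G^x,P^x]=(1/2)I (other brackets zero), the only proper nonzero ideals are r = span(G^x, P^x, I) and the center z = span(I). -/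
/-!
`P^t = b 0`, `D = b 1`, `K = b 2` span a copy of `sl₂` acting on the Heisenberg radical
`span(G^x, P^x, I)`. If an element of an ideal has a nonzero `sl₂`-coordinate, two or three
brackets with `P^t` and `K` isolate a nonzero multiple of `P^t` or `K`, and from `P^t` or `K` the
ideal generates everything. Otherwise the ideal lies in the radical; a nonzero `G^x`- or
`P^x`-coordinate is isolated by one bracket with `K` or `P^t`, and `[G^x, P^x] = I/2` then gives the
whole radical. If those coordinates vanish too, the ideal lies in the one-dimensional center.
-/

open Submodule in
theorem Module.Basis.le_span_image_of_repr_eq_zero {ι R M : Type*} [Semiring R] [AddCommMonoid M]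
    [Module R M] (b : Module.Basis ι R M) {p : Submodule R M} {s : Set ι}
    (h : ∀ x ∈ p, ∀ i ∉ s, b.repr x i = 0) : p ≤ span R (b '' s) := fun x hx =>
  b.mem_span_image.mpr fun i hi => by_contra fun his => Finsupp.mem_support_iff.mp hi (h x hx i his)

open Submodule in
theorem Submodule.eq_span_singleton_of_le_of_ne_bot {K V : Type*} [DivisionRing K] [AddCommGroup V]
    [Module K V] {p : Submodule K V} {v : V} (hle : p ≤ K ∙ v) (hp : p ≠ ⊥) : p = K ∙ v := by
  obtain ⟨_, hx, hx0⟩ := p.ne_bot_iff.mp hp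
  obtain ⟨c, rfl⟩ := mem_span_singleton.mp (hle hx)
  have hc : c ≠ 0 := by rintro rfl; exact hx0 (zero_smul K v)
  exact le_antisymm hle ((span_singleton_le_iff_mem v p).mpr ((p.smul_mem_iff hc).mp hx))

theorem LieSubmodule.eq_top_of_forall_basis_mem {ι R L M : Type*} [CommRing R] [LieRing L]
    [LieAlgebra R L] [AddCommGroup M] [Module R M] [LieRingModule L M] [LieModule R L M]
    {N : LieSubmodule R L M} (b : Module.Basis ι R M) (h : ∀ i, b i ∈ N) : N = ⊤ := by
  rw [← LieSubmodule.toSubmodule_eq_top, eq_top_iff, ← b.span_eq]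
  exact Submodule.span_le.mpr (Set.range_subset_iff.mpr h)

theorem LieSubmodule.mem_of_smul_mem {K L M : Type*} [Field K] [LieRing L] [LieAlgebra K L]
    [AddCommGroup M] [Module K M] [LieRingModule L M] [LieModule K L M] (N : LieSubmodule K L M)
    {c : K} (hc : c ≠ 0) {x : M} (h : c • x ∈ N) : x ∈ N :=
  ((N : Submodule K M).smul_mem_iff hc).mp h

/-- The brackets of the heat algebra `(P^t, D, K, G^x, P^x, I) = (b 0, ..., b 5)` from which the
rest of its table follows by the Jacobi identity. -/
structure HeatBrackets {L : Type*} [LieRing L] [LieAlgebra ℝ L] (b : Module.Basis (Fin 6) ℝ L) :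
    Prop where
  lie_b1_b0 : ⁅b 1, b 0⁆ = (-2 : ℝ) • b 0
  lie_b1_b2 : ⁅b 1, b 2⁆ = (2 : ℝ) • b 2
  lie_b0_b2 : ⁅b 0, b 2⁆ = b 1
  lie_b0_b3 : ⁅b 0, b 3⁆ = b 4
  lie_b0_b4 : ⁅b 0, b 4⁆ = 0
  lie_b0_b5 : ⁅b 0, b 5⁆ = 0
  lie_b2_b3 : ⁅b 2, b 3⁆ = 0
  lie_b2_b4 : ⁅b 2, b 4⁆ = -b 3
  lie_b2_b5 : ⁅b 2, b 5⁆ = 0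
  lie_b3_b4 : ⁅b 3, b 4⁆ = (1 / 2 : ℝ) • b 5

namespace HeatBrackets

variable {L : Type*} [LieRing L] [LieAlgebra ℝ L] {b : Module.Basis (Fin 6) ℝ L}
  {I : LieIdeal ℝ L}

theorem lie_b0_b1 (hb : HeatBrackets b) : ⁅b 0, b 1⁆ = (2 : ℝ) • b 0 := by
  rw [← lie_skew, hb.lie_b1_b0]; module

theorem lie_b2_b0 (hb : HeatBrackets b) : ⁅b 2, b 0⁆ = -b 1 := by
  rw [← lie_skew, hb.lie_b0_b2]

theorem lie_b2_b1 (hb : HeatBrackets b) : ⁅b 2, b 1⁆ = (-2 : ℝ) • b 2 := by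
  rw [← lie_skew, hb.lie_b1_b2]; module

theorem lie_b0_eq (hb : HeatBrackets b) (x : L) :
    ⁅b 0, x⁆ = (2 * b.repr x 1) • b 0 + b.repr x 2 • b 1 + b.repr x 3 • b 4 := by
  conv_lhs => rw [← b.sum_repr x]
  simp only [Fin.sum_univ_six, lie_add, lie_smul, lie_self, hb.lie_b0_b1, hb.lie_b0_b2,
    hb.lie_b0_b3, hb.lie_b0_b4, hb.lie_b0_b5, smul_zero]
  module

theorem lie_b2_eq (hb : HeatBrackets b) (x : L) :
    ⁅b 2, x⁆ = -(b.repr x 0 • b 1 + (2 * b.repr x 1) • b 2 + b.repr x 4 • b 3) := by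
  conv_lhs => rw [← b.sum_repr x]
  simp only [Fin.sum_univ_six, lie_add, lie_smul, lie_self, hb.lie_b2_b0, hb.lie_b2_b1,
    hb.lie_b2_b3, hb.lie_b2_b4, hb.lie_b2_b5, smul_zero]
  module

theorem radical_mem (hb : HeatBrackets b) (h : b 3 ∈ I ∨ b 4 ∈ I) :
    b 3 ∈ I ∧ b 4 ∈ I ∧ b 5 ∈ I := by
  have h4 : b 4 ∈ I := h.elim (fun h3 => hb.lie_b0_b3 ▸ I.lie_mem h3) id
  have h3 : b 3 ∈ I := neg_mem_iff.mp (hb.lie_b2_b4 ▸ I.lie_mem h4)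
  exact ⟨h3, h4, I.mem_of_smul_mem (by norm_num) (hb.lie_b3_b4 ▸ I.lie_mem h4)⟩

theorem eq_top_of_b1_mem (hb : HeatBrackets b) (h1 : b 1 ∈ I) : I = ⊤ := by
  have h0 : b 0 ∈ I := I.mem_of_smul_mem (by norm_num) (hb.lie_b1_b0 ▸ lie_mem_left _ _ I _ _ h1)
  have h2 : b 2 ∈ I := I.mem_of_smul_mem (by norm_num) (hb.lie_b1_b2 ▸ lie_mem_left _ _ I _ _ h1)
  obtain ⟨h3, h4, h5⟩ := hb.radical_mem (Or.inr (hb.lie_b0_b3 ▸ lie_mem_left _ _ I _ _ h0))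
  refine LieSubmodule.eq_top_of_forall_basis_mem b fun i => ?_
  fin_cases i <;> assumption

theorem repr_eq_zero_of_mem (hb : HeatBrackets b) (hI : I ≠ ⊤) {x : L} (hx : x ∈ I) :
    b.repr x 0 = 0 ∧ b.repr x 1 = 0 ∧ b.repr x 2 = 0 := by
  have h1 : b 1 ∉ I := fun h => hI (hb.eq_top_of_b1_mem h)
  have h0 : b 0 ∉ I := fun h => h1 (hb.lie_b0_b2 ▸ lie_mem_left _ _ I _ _ h)
  have h2 : b 2 ∉ I := fun h => h1 (hb.lie_b0_b2 ▸ I.lie_mem h)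
  have ad00 : ⁅b 0, ⁅b 0, x⁆⁆ = (2 * b.repr x 2) • b 0 := by
    rw [hb.lie_b0_eq x]
    simp only [lie_add, lie_smul, lie_self, hb.lie_b0_b1, hb.lie_b0_b4, smul_zero]
    module
  have ad22 : ⁅b 2, ⁅b 2, x⁆⁆ = (2 * b.repr x 0) • b 2 := by
    rw [hb.lie_b2_eq x]
    simp only [lie_neg, lie_add, lie_smul, lie_self, hb.lie_b2_b1, hb.lie_b2_b3, smul_zero]
    module
  have ad220 : ⁅b 2, ⁅b 2, ⁅b 0, x⁆⁆⁆ = (4 * b.repr x 1) • b 2 := by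
    rw [hb.lie_b0_eq x]
    simp only [lie_neg, lie_add, lie_smul, lie_self, hb.lie_b2_b0, hb.lie_b2_b1, hb.lie_b2_b3,
      hb.lie_b2_b4, smul_zero, smul_neg]
    module
  refine ⟨?_, ?_, ?_⟩ <;> by_contra hc
  · exact h2 (I.mem_of_smul_mem (by positivity) (ad22 ▸ I.lie_mem (I.lie_mem hx)))
  · exact h2 (I.mem_of_smul_mem (by positivity) (ad220 ▸ I.lie_mem (I.lie_mem (I.lie_mem hx))))
  · exact h0 (I.mem_of_smul_mem (by positivity) (ad00 ▸ I.lie_mem (I.lie_mem hx)))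

theorem b3_mem_or_b4_mem (hb : HeatBrackets b) (hI : I ≠ ⊤) {x : L} (hx : x ∈ I)
    (h : b.repr x 3 ≠ 0 ∨ b.repr x 4 ≠ 0) : b 3 ∈ I ∨ b 4 ∈ I := by
  obtain ⟨h0, h1, h2⟩ := hb.repr_eq_zero_of_mem hI hx
  refine h.symm.imp (fun h4 => ?_) (fun h3 => ?_)
  · have hb2x : ⁅b 2, x⁆ = -(b.repr x 4 • b 3) := by simp [hb.lie_b2_eq x, h0, h1]
    exact I.mem_of_smul_mem h4 (neg_mem_iff.mp (hb2x ▸ I.lie_mem hx))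
  · have hb0x : ⁅b 0, x⁆ = b.repr x 3 • b 4 := by simp [hb.lie_b0_eq x, h1, h2]
    exact I.mem_of_smul_mem h3 (hb0x ▸ I.lie_mem hx)

end HeatBrackets

theorem heat_algebra_ideals_general
    (L : Type*) [LieRing L] [LieAlgebra ℝ L] (b : Module.Basis (Fin 6) ℝ L)
    (h10 : ⁅b 1, b 0⁆ = (-2 : ℝ) • b 0)
    (h12 : ⁅b 1, b 2⁆ = (2 : ℝ) • b 2)
    (h02 : ⁅b 0, b 2⁆ = b 1)
    (h03 : ⁅b 0, b 3⁆ = b 4)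
    (h24 : ⁅b 2, b 4⁆ = -b 3)
    (h34 : ⁅b 3, b 4⁆ = (1 / 2 : ℝ) • b 5)
    (h04 : ⁅b 0, b 4⁆ = 0) (h23 : ⁅b 2, b 3⁆ = 0)
    (h05 : ⁅b 0, b 5⁆ = 0) (h25 : ⁅b 2, b 5⁆ = 0) :
    ∀ I : LieIdeal ℝ L, I ≠ ⊥ → I ≠ ⊤ →
      LieSubmodule.toSubmodule I = Submodule.span ℝ {b 3, b 4, b 5} ∨
      LieSubmodule.toSubmodule I = Submodule.span ℝ {b 5} := by
  have hb : HeatBrackets b := ⟨h10, h12, h02, h03, h04, h05, h23, h24, h25, h34⟩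
  intro I hbot htop
  have hsl2 := fun x (hx : x ∈ I) => hb.repr_eq_zero_of_mem htop hx
  by_cases hr : ∃ x ∈ I, b.repr x 3 ≠ 0 ∨ b.repr x 4 ≠ 0
  · left
    obtain ⟨x, hx, hx34⟩ := hr
    obtain ⟨h3, h4, h5⟩ := hb.radical_mem (hb.b3_mem_or_b4_mem htop hx hx34)
    refine le_antisymm ?_ (Submodule.span_le.mpr (by simp [Set.insert_subset_iff, h3, h4, h5]))
    rw [show ({b 3, b 4, b 5} : Set L) = b '' {3, 4, 5} by simp [Set.image_insert_eq]]
    refine b.le_span_image_of_repr_eq_zero fun x hx i hi => ?_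
    fin_cases i <;> simp_all
  · right
    refine Submodule.eq_span_singleton_of_le_of_ne_bot ?_ (by simpa using hbot)
    rw [← Set.image_singleton]
    refine b.le_span_image_of_repr_eq_zero fun x hx i hi => ?_
    fin_cases i <;> simp_all

/-- In the essential Lie invariance algebra of the heat equation, with basis
`(P^t, D, K, G^x, P^x, I) = (b 0, ..., b 5)` and the stated commutation relations,
the only proper nonzero ideals are the radical `r = span(G^x, P^x, I)` and the
center `z = span(I)`. -/
theorem heat_algebra_ideals
    (L : Type*) [LieRing L] [LieAlgebra ℝ L] (b : Module.Basis (Fin 6) ℝ L)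
    (h10 : ⁅b 1, b 0⁆ = (-2 : ℝ) • b 0)
    (h12 : ⁅b 1, b 2⁆ = (2 : ℝ) • b 2)
    (h02 : ⁅b 0, b 2⁆ = b 1)
    (h03 : ⁅b 0, b 3⁆ = b 4)
    (h13 : ⁅b 1, b 3⁆ = b 3)
    (h14 : ⁅b 1, b 4⁆ = -b 4)
    (h24 : ⁅b 2, b 4⁆ = -b 3)
    (h34 : ⁅b 3, b 4⁆ = (1 / 2 : ℝ) • b 5)
    (h04 : ⁅b 0, b 4⁆ = 0) (h23 : ⁅b 2, b 3⁆ = 0)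
    (h05 : ⁅b 0, b 5⁆ = 0) (h15 : ⁅b 1, b 5⁆ = 0) (h25 : ⁅b 2, b 5⁆ = 0)
    (h35 : ⁅b 3, b 5⁆ = 0) (h45 : ⁅b 4, b 5⁆ = 0) :
    ∀ I : LieIdeal ℝ L, I ≠ ⊥ → I ≠ ⊤ →
      LieSubmodule.toSubmodule I = Submodule.span ℝ {b 3, b 4, b 5} ∨
      LieSubmodule.toSubmodule I = Submodule.span ℝ {b 5} :=
  heat_algebra_ideals_general L b h10 h12 h02 h03 h24 h34 h04 h23 h05 h25
end

section
/- For each constant ε, the point transformation (t,x,u) ↦ (t/(1-εt), x/(1-εt), √|1-εt| · exp(εx²/(4(εt-1))) · u) maps solutions of the heat equation u_t = u_xx to solutions, on the region where 1 - εt > 0. -/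
/-- `u` satisfies the heat equation `u_t = u_xx` at the point `(t, x)`. -/
def HeatEqAt (u : ℝ → ℝ → ℝ) (t x : ℝ) : Prop :=
  deriv (fun s => u s x) t = deriv (deriv (u t)) x

lemma chainR (F : ℝ × ℝ → ℝ) (hF : Differentiable ℝ F) (γ : ℝ → ℝ × ℝ)
    (v w s₀ : ℝ) (hγ : HasDerivAt γ (v, w) s₀) :
    HasDerivAt (fun s => F (γ s))
      (v * fderiv ℝ F (γ s₀) (1, 0) + w * fderiv ℝ F (γ s₀) (0, 1)) s₀ := by
  have h := (hF (γ s₀)).hasFDerivAt.comp_hasDerivAt s₀ hγ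
  refine h.congr_deriv ?_
  have hvw : (v, w) = v • ((1:ℝ), (0:ℝ)) + w • ((0:ℝ), (1:ℝ)) := by
    simp [Prod.ext_iff]
  rw [hvw, map_add, map_smul, map_smul]
  simp [smul_eq_mul]

set_option maxHeartbeats 2000000 in
/-- For each constant `ε`, the point symmetry
`(t,x,u) ↦ (t/(1-εt), x/(1-εt), √|1-εt| · exp(εx²/(4(εt-1))) · u)` of the heat equation
maps solutions to solutions on the region where `1 - εt > 0`:
if `f` is a smooth solution there, then the transformed function
`g(s,y) = exp(-εy²/(4(1+εs)))/√(1+εs) · f(s/(1+εs), y/(1+εs))` solves the heat equation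
wherever `1 + εs > 0`. -/
theorem heat_symmetry_K (ε : ℝ) (f : ℝ → ℝ → ℝ)
    (hf : ContDiff ℝ (⊤ : ℕ∞) (Function.uncurry f))
    (hsol : ∀ t x : ℝ, 0 < 1 - ε * t → HeatEqAt f t x) :
    ∀ s y : ℝ, 0 < 1 + ε * s →
      HeatEqAt (fun s y =>
        Real.exp (-(ε * y ^ 2) / (4 * (1 + ε * s))) / Real.sqrt (1 + ε * s) *
          f (s / (1 + ε * s)) (y / (1 + ε * s))) s y := by

  intro s y hs
  rw [HeatEqAt]
  beta_reduce
  have hFd : Differentiable ℝ (Function.uncurry f) := hf.differentiable (by simp)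
  set F := Function.uncurry f with hFdef
  set Q : ℝ × ℝ → ℝ := fun z => fderiv ℝ F z (0, 1) with hQdef
  have hQc : ContDiff ℝ (⊤ : ℕ∞) Q := (hf.fderiv_right (by simp)).clm_apply contDiff_const
  have hQd : Differentiable ℝ Q := hQc.differentiable (by simp)
  set P : ℝ × ℝ → ℝ := fun z => fderiv ℝ F z (1, 0) with hPdef
  set R : ℝ × ℝ → ℝ := fun z => fderiv ℝ Q z (0, 1) with hRdef
  -- partial derivatives of f
  have hx : ∀ t x : ℝ, HasDerivAt (fun x' => f t x') (Q (t, x)) x := by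
    intro t x
    have h := chainR F hFd (fun x' => (t, x')) 0 1 x
      ((hasDerivAt_const x t).prodMk (hasDerivAt_id x))
    have h2 : HasDerivAt (fun x' => f t x')
        (0 * fderiv ℝ F (t, x) (1, 0) + 1 * Q (t, x)) x := h
    simpa using h2
  have hQx : ∀ t x : ℝ, HasDerivAt (fun x' => Q (t, x')) (R (t, x)) x := by
    intro t x
    have h := chainR Q hQd (fun x' => (t, x')) 0 1 x
      ((hasDerivAt_const x t).prodMk (hasDerivAt_id x))
    have h2 : HasDerivAt (fun x' => Q (t, x'))
        (0 * fderiv ℝ Q (t, x) (1, 0) + 1 * R (t, x)) x := h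
    simpa using h2
  have hxx : ∀ t x : ℝ, deriv (deriv (f t)) x = R (t, x) := by
    intro t x
    have h1 : deriv (f t) = fun x' => Q (t, x') := funext fun x' => (hx t x').deriv
    rw [h1, (hQx t x).deriv]
  have hPt : ∀ t x : ℝ, deriv (fun t' => f t' x) t = P (t, x) := by
    intro t x
    have h := chainR F hFd (fun t' => (t', x)) 1 0 t
      ((hasDerivAt_id t).prodMk (hasDerivAt_const t x))
    have h2 : HasDerivAt (fun t' => f t' x)
        (1 * P (t, x) + 0 * fderiv ℝ F (t, x) (0, 1)) t := h
    have h3 : HasDerivAt (fun t' => f t' x) (P (t, x)) t := by simpa using h2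
    exact h3.deriv
  have hheat : ∀ t x : ℝ, 0 < 1 - ε * t → P (t, x) = R (t, x) := by
    intro t x h
    have h0 := hsol t x h
    rw [HeatEqAt] at h0
    rw [← hPt t x, h0, hxx]
  -- the region
  have ha : (0:ℝ) < 1 + ε * s := hs
  have hane : (1 + ε * s) ≠ 0 := ne_of_gt ha
  have hsane : Real.sqrt (1 + ε * s) ≠ 0 := (Real.sqrt_pos.mpr ha).ne'
  have hss : Real.sqrt (1 + ε * s) * Real.sqrt (1 + ε * s) = 1 + ε * s :=
    Real.mul_self_sqrt ha.le
  set u : ℝ := Real.sqrt (1 + ε * s) with hu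
  have hu0 : u ≠ 0 := hsane
  have huu : u * u = 1 + ε * s := hss
  have hregion : 0 < 1 - ε * (s / (1 + ε * s)) := by
    have he : 1 - ε * (s / (1 + ε * s)) = 1 / (1 + ε * s) := by field_simp; ring
    rw [he]
    positivity
  -- space derivatives
  have hA : ∀ y' : ℝ, HasDerivAt
      (fun z => Real.exp (-(ε * z ^ 2) / (4 * (1 + ε * s))) / u)
      (Real.exp (-(ε * y' ^ 2) / (4 * (1 + ε * s))) / u
        * (-(ε * y') / (2 * (1 + ε * s)))) y' := by
    intro y'
    have h0 : HasDerivAt (fun z : ℝ => z ^ 2) (2 * y') y' := by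
      simpa using hasDerivAt_pow 2 y'
    have h1 : HasDerivAt (fun z : ℝ => -(ε * z ^ 2) / (4 * (1 + ε * s)))
        (-(ε * y') / (2 * (1 + ε * s))) y' := by
      have h2 := ((h0.const_mul ε).neg).div_const (4 * (1 + ε * s))
      refine h2.congr_deriv ?_
      field_simp
      ring
    have h3 := (h1.exp).div_const (u)
    refine h3.congr_deriv ?_
    ring
  have hφ : ∀ y' : ℝ, HasDerivAt (fun z => f (s / (1 + ε * s)) (z / (1 + ε * s)))
      (Q (s / (1 + ε * s), y' / (1 + ε * s)) / (1 + ε * s)) y' := by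
    intro y'
    have hγ : HasDerivAt (fun z : ℝ => (s / (1 + ε * s), z / (1 + ε * s)))
        ((0:ℝ), 1 / (1 + ε * s)) y' :=
      (hasDerivAt_const y' (s / (1 + ε * s))).prodMk ((hasDerivAt_id y').div_const (1 + ε * s))
    have h := chainR F hFd _ 0 (1 / (1 + ε * s)) y' hγ
    have h2 : HasDerivAt (fun z => f (s / (1 + ε * s)) (z / (1 + ε * s)))
        (0 * P (s / (1 + ε * s), y' / (1 + ε * s))
          + (1 / (1 + ε * s)) * Q (s / (1 + ε * s), y' / (1 + ε * s))) y' := h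
    have h3 : 0 * P (s / (1 + ε * s), y' / (1 + ε * s))
          + (1 / (1 + ε * s)) * Q (s / (1 + ε * s), y' / (1 + ε * s))
        = Q (s / (1 + ε * s), y' / (1 + ε * s)) / (1 + ε * s) := by ring
    rwa [h3] at h2
  have hg1 : ∀ y' : ℝ, HasDerivAt
      (fun z => Real.exp (-(ε * z ^ 2) / (4 * (1 + ε * s))) / u
        * f (s / (1 + ε * s)) (z / (1 + ε * s)))
      (Real.exp (-(ε * y' ^ 2) / (4 * (1 + ε * s))) / u
          * (-(ε * y') / (2 * (1 + ε * s))) * f (s / (1 + ε * s)) (y' / (1 + ε * s))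
        + Real.exp (-(ε * y' ^ 2) / (4 * (1 + ε * s))) / u
          * (Q (s / (1 + ε * s), y' / (1 + ε * s)) / (1 + ε * s))) y' :=
    fun y' => (hA y').mul (hφ y')
  have hd1 : deriv (fun z => Real.exp (-(ε * z ^ 2) / (4 * (1 + ε * s))) / u
        * f (s / (1 + ε * s)) (z / (1 + ε * s)))
      = fun y' => Real.exp (-(ε * y' ^ 2) / (4 * (1 + ε * s))) / u
          * (-(ε * y') / (2 * (1 + ε * s))) * f (s / (1 + ε * s)) (y' / (1 + ε * s))
        + Real.exp (-(ε * y' ^ 2) / (4 * (1 + ε * s))) / u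
          * (Q (s / (1 + ε * s), y' / (1 + ε * s)) / (1 + ε * s)) :=
    funext fun y' => (hg1 y').deriv
  -- second space derivative pieces
  have hL : HasDerivAt (fun y' : ℝ => -(ε * y') / (2 * (1 + ε * s)))
      (-(ε * 1) / (2 * (1 + ε * s))) y :=
    (((hasDerivAt_id y).const_mul ε).neg).div_const (2 * (1 + ε * s))
  have hQ2 : HasDerivAt (fun y' => Q (s / (1 + ε * s), y' / (1 + ε * s)))
      (R (s / (1 + ε * s), y / (1 + ε * s)) / (1 + ε * s)) y := by
    have hγ : HasDerivAt (fun z : ℝ => (s / (1 + ε * s), z / (1 + ε * s)))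
        ((0:ℝ), 1 / (1 + ε * s)) y :=
      (hasDerivAt_const y (s / (1 + ε * s))).prodMk ((hasDerivAt_id y).div_const (1 + ε * s))
    have h := chainR Q hQd _ 0 (1 / (1 + ε * s)) y hγ
    have h2 : HasDerivAt (fun z => Q (s / (1 + ε * s), z / (1 + ε * s)))
        (0 * fderiv ℝ Q (s / (1 + ε * s), y / (1 + ε * s)) (1, 0)
          + (1 / (1 + ε * s)) * R (s / (1 + ε * s), y / (1 + ε * s))) y := h
    have h3 : 0 * fderiv ℝ Q (s / (1 + ε * s), y / (1 + ε * s)) (1, 0)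
          + (1 / (1 + ε * s)) * R (s / (1 + ε * s), y / (1 + ε * s))
        = R (s / (1 + ε * s), y / (1 + ε * s)) / (1 + ε * s) := by ring
    rwa [h3] at h2
  have hQ3 : HasDerivAt (fun y' => Q (s / (1 + ε * s), y' / (1 + ε * s)) / (1 + ε * s))
      (R (s / (1 + ε * s), y / (1 + ε * s)) / (1 + ε * s) / (1 + ε * s)) y :=
    hQ2.div_const (1 + ε * s)
  have hG2 := (((hA y).mul hL).mul (hφ y)).add ((hA y).mul hQ3)
  -- time derivative
  have hb : HasDerivAt (fun s' : ℝ => 1 + ε * s') (ε * 1) s :=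
    ((hasDerivAt_id s).const_mul ε).const_add 1
  have hden : HasDerivAt (fun s' : ℝ => 4 * (1 + ε * s')) (4 * (ε * 1)) s :=
    hb.const_mul 4
  have hc : HasDerivAt (fun s' : ℝ => -(ε * y ^ 2) / (4 * (1 + ε * s')))
      ((0 * (4 * (1 + ε * s)) - -(ε * y ^ 2) * (4 * (ε * 1))) / (4 * (1 + ε * s)) ^ 2) s :=
    (hasDerivAt_const s (-(ε * y ^ 2))).div hden (by positivity)
  have hce := hc.exp
  have hsq : HasDerivAt (fun s' : ℝ => Real.sqrt (1 + ε * s'))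
      (ε * 1 / (2 * u)) s := hb.sqrt hane
  have hquot := hce.div hsq hsane
  have hT : HasDerivAt (fun s' : ℝ => s' / (1 + ε * s'))
      ((1 * (1 + ε * s) - s * (ε * 1)) / (1 + ε * s) ^ 2) s :=
    (hasDerivAt_id s).div hb hane
  have hY : HasDerivAt (fun s' : ℝ => y / (1 + ε * s'))
      ((0 * (1 + ε * s) - y * (ε * 1)) / (1 + ε * s) ^ 2) s :=
    (hasDerivAt_const s y).div hb hane
  have hγt : HasDerivAt (fun s' : ℝ => (s' / (1 + ε * s'), y / (1 + ε * s')))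
      ((1 * (1 + ε * s) - s * (ε * 1)) / (1 + ε * s) ^ 2,
       (0 * (1 + ε * s) - y * (ε * 1)) / (1 + ε * s) ^ 2) s := hT.prodMk hY
  have hchain := chainR F hFd _ _ _ s hγt
  have hchain2 : HasDerivAt (fun s' => f (s' / (1 + ε * s')) (y / (1 + ε * s')))
      ((1 * (1 + ε * s) - s * (ε * 1)) / (1 + ε * s) ^ 2 * P (s / (1 + ε * s), y / (1 + ε * s))
        + (0 * (1 + ε * s) - y * (ε * 1)) / (1 + ε * s) ^ 2
          * Q (s / (1 + ε * s), y / (1 + ε * s))) s := hchain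
  -- clean up the time derivative of the prefactor
  have hquot' : HasDerivAt
      (fun s' : ℝ => Real.exp (-(ε * y ^ 2) / (4 * (1 + ε * s'))) / Real.sqrt (1 + ε * s'))
      (Real.exp (-(ε * y ^ 2) / (4 * (1 + ε * s))) / u
        * (ε ^ 2 * y ^ 2 / (4 * (1 + ε * s) ^ 2) - ε / (2 * (1 + ε * s)))) s := by
    refine hquot.congr_deriv ?_
    rw [← hu, ← huu]
    field_simp
    ring
  have hprod := hquot'.mul hchain2
  -- assemble
  simp only [Pi.mul_def, Pi.add_def] at hprod hG2
  rw [hprod.deriv, hd1, hG2.deriv]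
  rw [hheat _ _ hregion]
  field_simp
  ring
end

section
/- The space of n-th order linear generalized symmetries of the heat equation has dimension n+1. Precisely: the space of tuples of smooth functions (η⁰,...,ηⁿ) of (t,x) satisfying η^k_t - η^k_{xx} = 2η^{k-1}_x for k = 0,...,n+1 (with η^{-1} := 0 and η^{n+1} := 0), modulo tuples with ηⁿ = 0 extended appropriately, is (n+1)-dimensional; equivalently, ηⁿ must be a polynomial in t of degree at most n, and every polynomial θ ∈ ℝ_n[t] arises as ηⁿ for exactly one equivalence class. -/
/-- Partial derivative with respect to the first variable. -/
noncomputable def pd1 (u : ℝ → ℝ → ℝ) : ℝ → ℝ → ℝ := fun a b => deriv (fun s => u s b) a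
/-- Partial derivative with respect to the second variable. -/
noncomputable def pd2 (u : ℝ → ℝ → ℝ) : ℝ → ℝ → ℝ := fun a b => deriv (fun s => u a s) b

/-- The determining system for linear generalized symmetries
`η[u] = Σ_{k=0}^n η^k(t,x) u_k` of the heat equation:
`η^k_t - η^k_{xx} = 2 η^{k-1}_x` for `k = 0, …, n+1`, with `η^{-1} := 0`, `η^{n+1} := 0`. -/
def HeatDetSys (n : ℕ) (η : ℕ → ℝ → ℝ → ℝ) : Prop :=
  (∀ k, ContDiff ℝ (⊤ : ℕ∞) (Function.uncurry (η k))) ∧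
  (∀ k, n < k → η k = 0) ∧
  (∀ k ≤ n + 1, ∀ t x : ℝ,
    pd1 (η k) t x - pd2 (pd2 (η k)) t x =
      2 * (if k = 0 then 0 else pd2 (η (k - 1)) t x))


section HeatAuxSection
open Polynomial in


lemma poly_of_iter_deriv : ∀ (m : ℕ) (f : ℝ → ℝ), ContDiff ℝ (⊤ : ℕ∞) f →
    (∀ t, deriv^[m+1] f t = 0) →
    ∃ p : Polynomial ℝ, p.natDegree ≤ m ∧ ∀ t, f t = p.eval t := by
  intro m
  induction m with
  | zero =>
    intro f hf h
    refine ⟨C (f 0), by simp, fun t => ?_⟩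
    have : f t = f 0 :=
      is_const_of_deriv_eq_zero (hf.differentiable (by simp)) (fun y => by simpa using h y) t 0
    simpa using this
  | succ m ih =>
    intro f hf h
    obtain ⟨hd, hf'⟩ := contDiff_infty_iff_deriv.mp hf
    obtain ⟨q, hq, hfe⟩ := ih (deriv f) hf' (fun t => by
      have := h t
      rwa [show deriv^[m+1+1] f = deriv^[m+1] (deriv f) from Function.iterate_succ_apply _ _ _] at this)
    set p : Polynomial ℝ := q.sum (fun i a => C (a / (i+1)) * X^(i+1)) + C (f 0) with hp
    have hder : p.derivative = q := by
      rw [hp, derivative_add, derivative_C, add_zero, Polynomial.sum,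
        derivative_sum]
      have : ∀ i ∈ q.support, derivative (C (q.coeff i / (i+1)) * X^(i+1)) = C (q.coeff i) * X^i := by
        intro i _
        rw [derivative_C_mul_X_pow]
        congr 1
        · congr 1
          push_cast
          field_simp
      rw [Finset.sum_congr rfl this]
      exact q.sum_C_mul_X_pow_eq
    have hdeg : p.natDegree ≤ m + 1 := by
      refine (natDegree_add_le _ _).trans (max_le ?_ (by simp))
      rw [Polynomial.sum]
      refine natDegree_sum_le_of_forall_le _ _ (fun i hi => ?_)
      refine (natDegree_C_mul_le _ _).trans ?_
      have : i ≤ m := le_trans (le_natDegree_of_mem_supp i hi) hq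
      simpa using Nat.succ_le_succ this
    have hev0 : p.eval 0 = f 0 := by
      rw [hp]
      simp [Polynomial.sum, Polynomial.eval_finset_sum]
    refine ⟨p, hdeg, fun t => ?_⟩
    have hconst : ∀ s, f s - p.eval s = f 0 - p.eval 0 := by
      intro s
      refine is_const_of_deriv_eq_zero ((hf.differentiable (by simp)).sub (Polynomial.differentiable p)) (fun y => ?_) s 0
      rw [deriv_sub ((hf.differentiable (by simp)) y) ((Polynomial.differentiable p) y),
        Polynomial.deriv, hder, hfe y, sub_self]
    have := hconst t
    rw [hev0, sub_self] at this
    linarith [this]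

namespace HeatAux


abbrev Sm (f : ℝ → ℝ → ℝ) : Prop := ContDiff ℝ (⊤ : ℕ∞) (Function.uncurry f)

lemma hasDerivAt_slice1 {f : ℝ → ℝ → ℝ} (hf : Differentiable ℝ (Function.uncurry f))
    (t x : ℝ) : HasDerivAt (fun s => f s x) (fderiv ℝ (Function.uncurry f) (t, x) (1, 0)) t := by
  have h1 : HasFDerivAt (Function.uncurry f) (fderiv ℝ (Function.uncurry f) (t, x)) (t, x) :=
    (hf (t, x)).hasFDerivAt
  have h2 : HasDerivAt (fun s : ℝ => ((s, x) : ℝ × ℝ)) (1, 0) t :=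
    (hasDerivAt_id t).prodMk (hasDerivAt_const t x)
  exact h1.comp_hasDerivAt t h2

lemma hasDerivAt_slice2 {f : ℝ → ℝ → ℝ} (hf : Differentiable ℝ (Function.uncurry f))
    (t x : ℝ) : HasDerivAt (fun s => f t s) (fderiv ℝ (Function.uncurry f) (t, x) (0, 1)) x := by
  have h1 : HasFDerivAt (Function.uncurry f) (fderiv ℝ (Function.uncurry f) (t, x)) (t, x) :=
    (hf (t, x)).hasFDerivAt
  have h2 : HasDerivAt (fun s : ℝ => ((t, s) : ℝ × ℝ)) (0, 1) x :=
    (hasDerivAt_const x t).prodMk (hasDerivAt_id x)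
  exact h1.comp_hasDerivAt x h2

lemma pd1_eq {f : ℝ → ℝ → ℝ} (hf : Sm f) (t x : ℝ) :
    pd1 f t x = fderiv ℝ (Function.uncurry f) (t, x) (1, 0) :=
  (hasDerivAt_slice1 (hf.differentiable (by simp)) t x).deriv

lemma pd2_eq {f : ℝ → ℝ → ℝ} (hf : Sm f) (t x : ℝ) :
    pd2 f t x = fderiv ℝ (Function.uncurry f) (t, x) (0, 1) :=
  (hasDerivAt_slice2 (hf.differentiable (by simp)) t x).deriv

lemma Sm_fderiv_apply {f : ℝ → ℝ → ℝ} (hf : Sm f) (v : ℝ × ℝ) :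
    ContDiff ℝ (⊤ : ℕ∞) (fun p : ℝ × ℝ => fderiv ℝ (Function.uncurry f) p v) := by
  have h1 : ContDiff ℝ (⊤ : ℕ∞) (fderiv ℝ (Function.uncurry f)) :=
    hf.fderiv_right (by simp)
  exact (ContinuousLinearMap.apply ℝ ℝ v).contDiff.comp h1

lemma Sm_pd1 {f : ℝ → ℝ → ℝ} (hf : Sm f) : Sm (pd1 f) := by
  have : Function.uncurry (pd1 f) = fun p : ℝ × ℝ => fderiv ℝ (Function.uncurry f) p (1, 0) := by
    funext p
    exact pd1_eq hf p.1 p.2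
  unfold Sm; rw [this]; exact Sm_fderiv_apply hf _

lemma Sm_pd2 {f : ℝ → ℝ → ℝ} (hf : Sm f) : Sm (pd2 f) := by
  have : Function.uncurry (pd2 f) = fun p : ℝ × ℝ => fderiv ℝ (Function.uncurry f) p (0, 1) := by
    funext p
    exact pd2_eq hf p.1 p.2
  unfold Sm; rw [this]; exact Sm_fderiv_apply hf _

lemma pd_comm {f : ℝ → ℝ → ℝ} (hf : Sm f) (t x : ℝ) :
    pd1 (pd2 f) t x = pd2 (pd1 f) t x := by
  set F := Function.uncurry f
  have hd : Differentiable ℝ F := hf.differentiable (by simp)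
  have hF' : ∀ y, HasFDerivAt F (fderiv ℝ F y) y := fun y => (hd y).hasFDerivAt
  have hdF : Differentiable ℝ (fderiv ℝ F) :=
    (hf.fderiv_right (m := (⊤ : ℕ∞)) (by simp)).differentiable (by simp)
  have hsym := second_derivative_symmetric hF'
      ((hdF (t, x)).hasFDerivAt) (v := (1,0)) (w := (0,1))
  -- pd1 (pd2 f) t x
  have e1 : pd1 (pd2 f) t x = fderiv ℝ (Function.uncurry (pd2 f)) (t, x) (1, 0) :=
    pd1_eq (Sm_pd2 hf) t x
  have e2 : pd2 (pd1 f) t x = fderiv ℝ (Function.uncurry (pd1 f)) (t, x) (0, 1) :=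
    pd2_eq (Sm_pd1 hf) t x
  have u2 : Function.uncurry (pd2 f) = fun p : ℝ × ℝ => fderiv ℝ F p (0, 1) := by
    funext p; exact pd2_eq hf p.1 p.2
  have u1 : Function.uncurry (pd1 f) = fun p : ℝ × ℝ => fderiv ℝ F p (1, 0) := by
    funext p; exact pd1_eq hf p.1 p.2
  have d2 : HasFDerivAt (fun p : ℝ × ℝ => fderiv ℝ F p (0, 1))
      (((fderiv ℝ F (t, x)).comp (0 : ℝ × ℝ →L[ℝ] ℝ × ℝ)) +
        (fderiv ℝ (fderiv ℝ F) (t, x)).flip (0, 1)) (t, x) :=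
    ((hdF (t, x)).hasFDerivAt).clm_apply (hasFDerivAt_const _ _)
  have d1 : HasFDerivAt (fun p : ℝ × ℝ => fderiv ℝ F p (1, 0))
      (((fderiv ℝ F (t, x)).comp (0 : ℝ × ℝ →L[ℝ] ℝ × ℝ)) +
        (fderiv ℝ (fderiv ℝ F) (t, x)).flip (1, 0)) (t, x) :=
    ((hdF (t, x)).hasFDerivAt).clm_apply (hasFDerivAt_const _ _)
  have c1 : fderiv ℝ (Function.uncurry (pd2 f)) (t, x) (1, 0)
      = (fderiv ℝ (fderiv ℝ F) (t, x)) (1, 0) (0, 1) := by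
    rw [u2, d2.fderiv]; simp
  have c2 : fderiv ℝ (Function.uncurry (pd1 f)) (t, x) (0, 1)
      = (fderiv ℝ (fderiv ℝ F) (t, x)) (0, 1) (1, 0) := by
    rw [u1, d1.fderiv]; simp
  rw [e1, e2, c1, c2, hsym]



lemma Sm_pd2_iter {f : ℝ → ℝ → ℝ} (hf : Sm f) (j : ℕ) : Sm (pd2^[j] f) := by
  induction j with
  | zero => exact hf
  | succ j ih => rw [Function.iterate_succ_apply']; exact Sm_pd2 ih

lemma contDiff_slice1 {f : ℝ → ℝ → ℝ} (hf : Sm f) (x : ℝ) :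
    ContDiff ℝ (⊤ : ℕ∞) (fun t => f t x) :=
  hf.comp (contDiff_id.prodMk contDiff_const)

lemma contDiff_slice2 {f : ℝ → ℝ → ℝ} (hf : Sm f) (t : ℝ) :
    ContDiff ℝ (⊤ : ℕ∞) (fun s => f t s) :=
  hf.comp (contDiff_const.prodMk contDiff_id)

lemma pd_comm_iter {f : ℝ → ℝ → ℝ} (hf : Sm f) (j : ℕ) :
    pd2^[j] (pd1 f) = pd1 (pd2^[j] f) := by
  induction j generalizing f with
  | zero => rfl
  | succ j ih =>
    rw [Function.iterate_succ_apply, Function.iterate_succ_apply]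
    rw [show pd2 (pd1 f) = pd1 (pd2 f) by funext t x; exact (pd_comm hf t x).symm]
    exact ih (Sm_pd2 hf)

lemma pd2_zero : pd2 (fun _ _ => (0:ℝ)) = fun _ _ => (0:ℝ) := by
  funext t x; simp [pd2]

lemma pd2_iter_zero (j : ℕ) : pd2^[j] (fun _ _ => (0:ℝ)) = fun _ _ => (0:ℝ) := by
  induction j with
  | zero => rfl
  | succ j ih => rw [Function.iterate_succ_apply, pd2_zero, ih]

/-- pd2 of a pointwise linear combination `a•f - b•g` of smooth functions. -/
lemma pd2_combo {f g : ℝ → ℝ → ℝ} (hf : Sm f) (hg : Sm g) (a b : ℝ) :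
    pd2 (fun t x => a * f t x - b * g t x)
      = fun t x => a * pd2 f t x - b * pd2 g t x := by
  funext t x
  have h1 : DifferentiableAt ℝ (fun s => f t s) x :=
    (contDiff_slice2 hf t).differentiable (by simp) x
  have h2 : DifferentiableAt ℝ (fun s => g t s) x :=
    (contDiff_slice2 hg t).differentiable (by simp) x
  simp only [pd2]
  rw [deriv_fun_sub ((h1.const_mul a)) ((h2.const_mul b)), deriv_const_mul a h1,
    deriv_const_mul b h2]

lemma pd2_iter_combo {f g : ℝ → ℝ → ℝ} (hf : Sm f) (hg : Sm g) (a b : ℝ) (j : ℕ) :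
    pd2^[j] (fun t x => a * f t x - b * g t x)
      = fun t x => a * pd2^[j] f t x - b * pd2^[j] g t x := by
  induction j generalizing f g with
  | zero => rfl
  | succ j ih =>
    rw [Function.iterate_succ_apply, Function.iterate_succ_apply,
      Function.iterate_succ_apply, pd2_combo hf hg]
    exact ih (Sm_pd2 hf) (Sm_pd2 hg)

/-- If `pd2 f = 0` everywhere, `f` is constant in the second variable. -/
lemma const_of_pd2_zero {f : ℝ → ℝ → ℝ} (hf : Sm f)
    (h : ∀ t x, pd2 f t x = 0) (t x : ℝ) : f t x = f t 0 := by
  have : ∀ y : ℝ, DifferentiableAt ℝ (fun s => f t s) y := fun y =>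
    (contDiff_slice2 hf t).differentiable (by simp) y
  exact is_const_of_deriv_eq_zero (fun y => this y) (fun y => h t y) x 0


lemma smooth_iter_deriv {g : ℝ → ℝ} (hg : ContDiff ℝ (⊤ : ℕ∞) g) (j : ℕ) :
    ContDiff ℝ (⊤ : ℕ∞) (deriv^[j] g) := by
  induction j with
  | zero => exact hg
  | succ j ih =>
    rw [Function.iterate_succ_apply']
    exact (contDiff_infty_iff_deriv.mp ih).2

/-- pd1 of a function constant in x, times a constant. -/
lemma pd1_const_in_x {g : ℝ → ℝ} (hg : Differentiable ℝ g) (c : ℝ) :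
    pd1 (fun t _ => c * g t) = fun t _ => c * deriv g t := by
  funext t x
  simp only [pd1]
  rw [deriv_const_mul c (hg t)]

lemma iter_shift (i : ℕ) (g : ℝ → ℝ → ℝ) : pd2^[i] (pd2 g) = pd2 (pd2^[i] g) := by
  rw [← Function.iterate_succ_apply, Function.iterate_succ_apply']

lemma pd2_const_in_x {g : ℝ → ℝ} : pd2 (fun t _ => g t) = fun _ _ => (0:ℝ) := by
  funext t x; simp [pd2]

theorem part1 (n : ℕ) (η : ℕ → ℝ → ℝ → ℝ) (hη : HeatDetSys n η) :
    ∃ θ : Polynomial ℝ, θ.natDegree ≤ n ∧ ∀ t x : ℝ, η n t x = θ.eval t := by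
  obtain ⟨hsm, hhigh, heq⟩ := hη
  set θ : ℝ → ℝ := fun t => η n t 0 with hθdef
  have hθsm : ContDiff ℝ (⊤ : ℕ∞) θ := (contDiff_slice1 (hsm n) 0).of_le (by simp)
  -- pd2 (η n) = 0
  have htop : pd2 (η n) = fun _ _ => (0:ℝ) := by
    funext t x
    have h1 := heq (n+1) le_rfl t x
    rw [hhigh (n+1) (lt_add_one n)] at h1
    have hz1 : pd1 (0 : ℝ → ℝ → ℝ) t x = 0 := by simp [pd1]
    have hz2 : pd2 (pd2 (0 : ℝ → ℝ → ℝ)) t x = 0 := by simp [pd2]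
    rw [hz1, hz2, if_neg (Nat.succ_ne_zero n)] at h1
    simp only [Nat.add_sub_cancel] at h1
    linarith
  have hconst : ∀ t x, η n t x = θ t :=
    fun t x => const_of_pd2_zero (hsm n) (fun t x => by rw [htop]) t x
  -- main descent
  have key : ∀ j, j ≤ n →
      (∀ t x, pd2^[j+1] (η (n-j)) t x = 0) ∧
      (∀ t x, pd2^[j] (η (n-j)) t x = (2:ℝ)⁻¹^j * deriv^[j] θ t) := by
    intro j
    induction j with
    | zero =>
      intro _
      constructor
      · intro t x
        simpa using congrFun (congrFun htop t) x
      · intro t x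
        simpa using hconst t x
    | succ j ih =>
      intro hj1
      obtain ⟨ih1, ih2⟩ := ih (le_of_lt (Nat.lt_of_lt_of_le (Nat.lt_succ_self j) hj1))
      set k := n - j with hk
      have hkpos : 1 ≤ k := by omega
      have hkm : k - 1 = n - (j+1) := by omega
      have hkle : k ≤ n + 1 := by omega
      -- function form of IH
      have ih1' : pd2^[j+1] (η k) = fun _ _ => (0:ℝ) := by
        funext t x; exact ih1 t x
      have ih2' : pd2^[j] (η k) = fun t _ => (2:ℝ)⁻¹^j * deriv^[j] θ t := by
        funext t x; exact ih2 t x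
      -- equation at k, function form
      have heqk : pd1 (η k) =
          fun t x => 1 * pd2 (pd2 (η k)) t x - (-2) * pd2 (η (k-1)) t x := by
        funext t x
        have h1 := heq k hkle t x
        rw [if_neg (by omega : k ≠ 0)] at h1
        ring_nf
        ring_nf at h1
        linarith
      have hsmk : Sm (pd2 (pd2 (η k))) := Sm_pd2 (Sm_pd2 (hsm k))
      have hsmk1 : Sm (pd2 (η (k-1))) := Sm_pd2 (hsm (k-1))
      -- pd2^[j+1] of pd2 (pd2 (η k)) is zero
      have hA : pd2^[j+1] (pd2 (pd2 (η k))) = fun _ _ => (0:ℝ) := by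
        rw [iter_shift, iter_shift, ih1', pd2_zero, pd2_zero]
      -- pd2^[j] of pd2 (pd2 (η k)) is zero
      have hB : pd2^[j] (pd2 (pd2 (η k))) = fun _ _ => (0:ℝ) := by
        rw [iter_shift, iter_shift, ← Function.iterate_succ_apply' pd2 j, ih1', pd2_zero]
      constructor
      · -- first component
        intro t x
        have happ := congrFun (congrFun
          (congrArg (pd2^[j+1]) heqk) t) x
        rw [pd2_iter_combo hsmk hsmk1 1 (-2) (j+1)] at happ
        rw [pd_comm_iter (hsm k) (j+1), ih1'] at happ
        have hz : pd1 (fun _ _ => (0:ℝ)) t x = 0 := by simp [pd1]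
        rw [hz, hA] at happ
        rw [← hkm, Function.iterate_succ_apply pd2 (j+1) (η (k-1))]
        simp only [] at happ
        linarith [happ]
      · -- second component
        intro t x
        have happ := congrFun (congrFun (congrArg (pd2^[j]) heqk) t) x
        rw [pd2_iter_combo hsmk hsmk1 1 (-2) j] at happ
        rw [pd_comm_iter (hsm k) j, ih2'] at happ
        have hd : pd1 (fun t _ => (2:ℝ)⁻¹^j * deriv^[j] θ t) t x
            = (2:ℝ)⁻¹^j * deriv^[j+1] θ t := by
          rw [pd1_const_in_x ((smooth_iter_deriv hθsm j).differentiable (by simp)) ((2:ℝ)⁻¹^j)]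
          rw [Function.iterate_succ_apply']
        rw [hd, hB] at happ
        rw [← hkm]
        have : pd2^[j+1] (η (k-1)) t x = pd2^[j] (pd2 (η (k-1))) t x := by
          rw [Function.iterate_succ_apply]
        rw [this]
        simp only [one_mul, neg_mul, sub_neg_eq_add] at happ
        have h2 : (2:ℝ)⁻¹^(j+1) * deriv^[j+1] θ t = (2:ℝ)⁻¹^j * deriv^[j+1] θ t / 2 := by
          ring
        rw [h2]
        linarith [happ]
  -- conclude
  obtain ⟨k1, k2⟩ := key n le_rfl
  simp only [Nat.sub_self] at k1 k2
  have k1' : pd2^[n+1] (η 0) = fun _ _ => (0:ℝ) := by funext t x; exact k1 t x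
  have k2' : pd2^[n] (η 0) = fun t _ => (2:ℝ)⁻¹^n * deriv^[n] θ t := by
    funext t x; exact k2 t x
  -- equation at k = 0
  have heq0 : pd1 (η 0) =
      fun t x => 1 * pd2 (pd2 (η 0)) t x - 0 * pd2 (pd2 (η 0)) t x := by
    funext t x
    have h1 := heq 0 (by omega) t x
    rw [if_pos rfl] at h1
    ring_nf
    ring_nf at h1
    linarith
  have hB0 : pd2^[n] (pd2 (pd2 (η 0))) = fun _ _ => (0:ℝ) := by
    rw [iter_shift, iter_shift, ← Function.iterate_succ_apply' pd2 n, k1', pd2_zero]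
  have hzero : ∀ t, deriv^[n+1] θ t = 0 := by
    intro t
    have happ := congrFun (congrFun (congrArg (pd2^[n]) heq0) t) 0
    have hsm0 : Sm (pd2 (pd2 (η 0))) := Sm_pd2 (Sm_pd2 (hsm 0))
    rw [pd2_iter_combo hsm0 hsm0 1 0 n] at happ
    rw [pd_comm_iter (hsm 0) n, k2'] at happ
    have hd : pd1 (fun t _ => (2:ℝ)⁻¹^n * deriv^[n] θ t) t 0
        = (2:ℝ)⁻¹^n * deriv^[n+1] θ t := by
      rw [pd1_const_in_x ((smooth_iter_deriv hθsm n).differentiable (by simp)) ((2:ℝ)⁻¹^n)]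
      rw [Function.iterate_succ_apply']
    rw [hd, hB0] at happ
    have hc : (2:ℝ)⁻¹^n * deriv^[n+1] θ t = 0 := by linarith [happ]
    have hne : ((2:ℝ)⁻¹)^n ≠ 0 := pow_ne_zero n (by norm_num)
    exact (mul_eq_zero.mp hc).resolve_left hne
  obtain ⟨p, hp1, hp2⟩ := poly_of_iter_deriv n θ hθsm hzero
  exact ⟨p, hp1, fun t x => by rw [hconst t x, hp2 t]⟩

end HeatAux

namespace HeatAux2
open MvPolynomial

abbrev P2 := MvPolynomial (Fin 2) ℝ

noncomputable def ev (p : P2) (t x : ℝ) : ℝ := MvPolynomial.eval ![t, x] p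

lemma ev_smooth (p : P2) : ContDiff ℝ (⊤ : ℕ∞) (fun q : ℝ × ℝ => ev p q.1 q.2) := by
  induction p using MvPolynomial.induction_on with
  | C a => simpa [ev] using contDiff_const (c := a)
  | add p q hp hq =>
    simp only [ev, map_add]
    exact hp.add hq
  | mul_X p i hp =>
    simp only [ev, map_mul]
    apply hp.mul
    fin_cases i
    · simpa [MvPolynomial.eval_X] using contDiff_fst
    · simpa [MvPolynomial.eval_X] using contDiff_snd

lemma ev_hasDerivAt1 (p : P2) (t x : ℝ) :
    HasDerivAt (fun s => ev p s x) (ev (pderiv 0 p) t x) t := by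
  induction p using MvPolynomial.induction_on with
  | C a => simpa [ev] using hasDerivAt_const t _
  | add p q hp hq => simpa [ev, map_add] using hp.fun_add hq
  | mul_X p i hp =>
    have hX : HasDerivAt (fun s => ev (X i) s x) (ev (pderiv 0 (X i)) t x) t := by
      fin_cases i
      · simpa [ev, pderiv_X_self] using hasDerivAt_id' (x := t)
      · simpa [ev, pderiv_X_of_ne (show (1 : Fin 2) ≠ 0 by decide)] using hasDerivAt_const t x
    have := hp.fun_mul hX
    simpa [ev, map_mul, pderiv_mul, mul_comm, add_comm] using this
  
lemma ev_hasDerivAt2 (p : P2) (t x : ℝ) :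
    HasDerivAt (fun s => ev p t s) (ev (pderiv 1 p) t x) x := by
  induction p using MvPolynomial.induction_on with
  | C a => simpa [ev] using hasDerivAt_const x _
  | add p q hp hq => simpa [ev, map_add] using hp.fun_add hq
  | mul_X p i hp =>
    have hX : HasDerivAt (fun s => ev (X i) t s) (ev (pderiv 1 (X i)) t x) x := by
      fin_cases i
      · simpa [ev, pderiv_X_of_ne (show (0 : Fin 2) ≠ 1 by decide)] using hasDerivAt_const x t
      · simpa [ev, pderiv_X_self] using hasDerivAt_id' (x := x)
    have := hp.fun_mul hX
    simpa [ev, map_mul, pderiv_mul, mul_comm, add_comm] using this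

lemma pderiv_comm (p : P2) : pderiv 0 (pderiv 1 p) = pderiv 1 (pderiv 0 p) := by
  induction p using MvPolynomial.induction_on with
  | C a => simp [pderiv_C]
  | add p q hp hq => simp [map_add, hp, hq]
  | mul_X p i hp =>
    simp only [pderiv_mul, map_add, pderiv_mul, hp]
    fin_cases i <;>
      simp [pderiv_X_self, pderiv_X_of_ne, pderiv_mul, hp] <;> ring




/-- Coefficients of the operator `M^m` where `M = x + 2t∂ₓ` (a recursion operator for the
heat equation): `M^m = Σ_k A m k ∂ₓ^k`.  Variable `0` is `t`, variable `1` is `x`. -/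
noncomputable def A : ℕ → ℤ → P2
  | 0, k => if k = 0 then 1 else 0
  | (m+1), k => X 1 * A m k + C 2 * X 0 * (pderiv 1 (A m k) + A m (k-1))

lemma A_neg : ∀ m (k : ℤ), k < 0 → A m k = 0 := by
  intro m
  induction m with
  | zero => intro k hk; simp [A, show k ≠ 0 by omega]
  | succ m ih =>
    intro k hk
    simp [A, ih k hk, ih (k-1) (by omega)]

lemma A_top : ∀ (m : ℕ) (k : ℤ), (m : ℤ) < k → A m k = 0 := by
  intro m
  induction m with
  | zero => intro k hk; simp [A, show k ≠ 0 by omega]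
  | succ m ih =>
    intro k hk
    have h1 : A m k = 0 := ih k (by omega)
    have h2 : A m (k-1) = 0 := ih (k-1) (by omega)
    simp [A, h1, h2]

lemma A_diag : ∀ m : ℕ, A m (m : ℤ) = (C 2 * X 0)^m := by
  intro m
  induction m with
  | zero => simp [A]
  | succ m ih =>
    have hcast : ((m+1 : ℕ) : ℤ) = (m : ℤ) + 1 := by push_cast; ring
    rw [hcast]
    show X 1 * A m ((m:ℤ)+1) + C 2 * X 0 * (pderiv 1 (A m ((m:ℤ)+1)) + A m ((m:ℤ)+1-1)) = _
    have h1 : A m ((m:ℤ)+1) = 0 := A_top m _ (by omega)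
    have h2 : ((m:ℤ)+1-1) = (m:ℤ) := by ring
    rw [h1, h2, ih]
    simp only [map_zero, mul_zero, zero_add, zero_mul, add_zero]
    rw [pow_succ]
    ring

lemma pderiv0_two : pderiv (0 : Fin 2) (C 2 * X 0 : P2) = C 2 := by
  simp [pderiv_mul, pderiv_X_self, pderiv_C]

lemma pderiv_two (i : Fin 2) : pderiv i (2 : P2) = 0 := by
  rw [show (2 : P2) = C 2 from (map_ofNat C 2).symm]; exact pderiv_C

lemma detA : ∀ m (k : ℤ), pderiv 0 (A m k) =
    pderiv 1 (pderiv 1 (A m k)) + C 2 * pderiv 1 (A m (k-1)) := by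
  intro m
  induction m with
  | zero =>
    intro k
    by_cases h : k = 0 <;> by_cases h' : k - 1 = 0 <;>
      simp [A, h, h', pderiv_C]
  | succ m ih =>
    intro k
    have e2 : (k - 1 - 1 : ℤ) = k - 2 := by ring
    have ihk := ih k
    have ihk1 := ih (k-1)
    simp only [A, e2] at *
    have comm : ∀ p : P2, pderiv 0 (pderiv 1 p) = pderiv 1 (pderiv 0 p) := pderiv_comm
    simp only [map_add, pderiv_mul, pderiv_X_self, pderiv_one,
      pderiv_X_of_ne (show (1 : Fin 2) ≠ 0 by decide),
      pderiv_X_of_ne (show (0 : Fin 2) ≠ 1 by decide),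
      pderiv_C, comm, ihk, ihk1, mul_one, one_mul, mul_zero, zero_mul, zero_add, add_zero,
      map_ofNat, pderiv_two]
    ring



lemma pd1_ev (p : P2) : pd1 (fun t x => ev p t x) = fun t x => ev (pderiv 0 p) t x := by
  funext t x; exact (ev_hasDerivAt1 p t x).deriv

lemma pd2_ev (p : P2) : pd2 (fun t x => ev p t x) = fun t x => ev (pderiv 1 p) t x := by
  funext t x; exact (ev_hasDerivAt2 p t x).deriv

section Construct
variable (n : ℕ) (θ : Polynomial ℝ)

/-- coefficients of `Σ_m (θ_m/2^m) M^m ∂ₓ^{n-m}`. -/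
noncomputable def B (k : ℤ) : P2 :=
  ∑ m ∈ Finset.range (n+1), C (θ.coeff m / 2^m) * A m (k - n + m)

lemma detB (k : ℤ) : pderiv 0 (B n θ k) =
    pderiv 1 (pderiv 1 (B n θ k)) + C 2 * pderiv 1 (B n θ (k-1)) := by
  unfold B
  simp only [map_sum, Finset.mul_sum]
  rw [← Finset.sum_add_distrib]
  refine Finset.sum_congr rfl (fun m _ => ?_)
  rw [pderiv_C_mul, pderiv_C_mul, pderiv_C_mul, pderiv_C_mul, detA]
  have : (k - 1 - n + m : ℤ) = (k - n + m) - 1 := by ring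
  rw [this]
  ring

lemma B_top (k : ℤ) (hk : (n : ℤ) < k) : B n θ k = 0 := by
  unfold B
  refine Finset.sum_eq_zero (fun m hm => ?_)
  have hm' : m ≤ n := by simpa [Nat.lt_succ_iff] using hm
  rw [A_top m _ (by push_cast; omega), mul_zero]

lemma B_lead (hθ : θ.natDegree ≤ n) (t x : ℝ) : ev (B n θ n) t x = θ.eval t := by
  unfold B
  have : ∀ m ∈ Finset.range (n+1),
      ev (C (θ.coeff m / 2^m) * A m ((n : ℤ) - n + m)) t x = θ.coeff m * t^m := by
    intro m _
    have h1 : ((n : ℤ) - n + m) = (m : ℤ) := by ring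
    rw [h1, A_diag m]
    simp only [ev, map_mul, map_pow, eval_C, eval_X]
    have : (![t, x] : Fin 2 → ℝ) 0 = t := rfl
    rw [this]
    field_simp
    ring
  rw [show ev (∑ m ∈ Finset.range (n+1), C (θ.coeff m / 2^m) * A m ((n:ℤ) - n + m)) t x
      = ∑ m ∈ Finset.range (n+1), ev (C (θ.coeff m / 2^m) * A m ((n:ℤ) - n + m)) t x from by
    simp [ev, map_sum]]
  rw [Finset.sum_congr rfl this]
  rw [Polynomial.eval_eq_sum_range' (Nat.lt_succ_of_le hθ)]

noncomputable def etaF : ℕ → ℝ → ℝ → ℝ := fun k t x => ev (B n θ (k : ℤ)) t x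

lemma etaF_det : HeatDetSys n (etaF n θ) := by
  refine ⟨fun k => ev_smooth _, fun k hk => ?_, fun k _ t x => ?_⟩
  · funext t x
    show ev (B n θ k) t x = 0
    rw [B_top n θ _ (by exact_mod_cast hk)]
    simp [ev]
  · have e0 : etaF n θ k = fun t x => ev (B n θ (k : ℤ)) t x := rfl
    rw [e0, pd1_ev, pd2_ev, pd2_ev]
    have hdet := detB n θ (k : ℤ)
    have hev := congrArg (fun p => ev p t x) hdet
    simp only [ev, map_add, map_mul, eval_C] at hev
    by_cases hk : k = 0
    · subst hk
      rw [if_pos rfl]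
      have hB : B n θ ((0:ℤ)-1) = 0 := by
        unfold B
        refine Finset.sum_eq_zero (fun m hm => ?_)
        have hm' : m ≤ n := by simpa [Nat.lt_succ_iff] using hm
        rw [A_neg m _ (by omega), mul_zero]
      simp only [Nat.cast_zero] at hev
      rw [hB] at hev
      simp only [map_zero, MvPolynomial.eval_zero, mul_zero, add_zero] at hev
      simp only [ev, Nat.cast_zero] at hev ⊢
      linarith [hev]
    · rw [if_neg hk]
      have e1 : etaF n θ (k - 1) = fun t x => ev (B n θ ((k - 1 : ℕ) : ℤ)) t x := rfl
      rw [e1, pd2_ev]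
      have hcast : ((k:ℤ) - 1) = ((k - 1 : ℕ) : ℤ) := by
        have : 1 ≤ k := Nat.one_le_iff_ne_zero.mpr hk
        push_cast [this]; ring
      rw [hcast] at hev
      simp only [ev] at hev ⊢
      linarith [hev]

lemma etaF_lead (hθ : θ.natDegree ≤ n) (t x : ℝ) : etaF n θ n t x = θ.eval t :=
  B_lead n θ hθ t x

end Construct

end HeatAux2
end HeatAuxSection

/-- The space of `n`-th order linear generalized symmetries of the heat equation has
dimension `n+1`: modulo symmetries of lower order (i.e. tuples with `ηⁿ = 0`), a solution
tuple of the determining system is determined by its leading coefficient `ηⁿ`, which must be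
a polynomial in `t` of degree at most `n`, and every such polynomial occurs; the space
`ℝ_n[t]` of these polynomials has dimension `n+1`. -/
theorem heat_linear_generalized_symmetries_dimension (n : ℕ) :
    (∀ η : ℕ → ℝ → ℝ → ℝ, HeatDetSys n η →
      ∃ θ : Polynomial ℝ, θ.natDegree ≤ n ∧ ∀ t x : ℝ, η n t x = θ.eval t) ∧
    (∀ θ : Polynomial ℝ, θ.natDegree ≤ n →
      ∃ η : ℕ → ℝ → ℝ → ℝ, HeatDetSys n η ∧ ∀ t x : ℝ, η n t x = θ.eval t) ∧
    Module.finrank ℝ (Polynomial.degreeLT ℝ (n + 1)) = n + 1 := by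
  refine ⟨fun η hη => HeatAux.part1 n η hη,
    fun θ hθ => ⟨HeatAux2.etaF n θ, HeatAux2.etaF_det n θ, HeatAux2.etaF_lead n θ hθ⟩, ?_⟩
  rw [(Polynomial.degreeLTEquiv ℝ (n+1)).finrank_eq]
  simp [Module.finrank_fin_fun]
end
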